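/- arXiv:2105.04378 — 2 statements merged into one kernel-verified Lean document; each statement's English description precedes it below -/
import Mathlib

section
/- Fix integers 2 ≤ d ≤ n, a prime power q, and 4 ≤ S ≤ q^n. Let b be the size of the Hamming ball of radius d−1 in F_q^n, let β(0) = (1/2)q^n(b−1) − 2b + 3, β(1) = 2b − 4, and Ω = 1 + β(1)·(S−2)/(q^n−2) + β(0)·(S−2)(S−3)/((q^n−2)(q^n−3)). Then the number of codes C ⊆ F_q^n with |C| = S and minimum Hamming distance ≤ d−1 is at least q^n·(b−1)·C(q^n−2, S−2) / (2Ω). -/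
/-- The size of the Hamming ball of radius `d - 1` in `F_q^n`. -/
def hammingBallSize (q n d : ℕ) : ℕ :=
  ∑ i ∈ Finset.range d, Nat.choose n i * (q - 1) ^ i

open Finset

section Aux
variable {F : Type} [Fintype F] [DecidableEq F] {n : ℕ}


lemma sphere_card (x : Fin n → F) (i : ℕ) :
    ((univ : Finset (Fin n → F)).filter (fun y => hammingDist x y = i)).card
      = n.choose i * (Fintype.card F - 1) ^ i := by
  rw [Finset.card_eq_sum_card_fiberwise
    (f := fun y => univ.filter (fun j => x j ≠ y j)) (t := univ.powersetCard i) ?h]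
  case h =>
    intro y hy
    rw [Finset.mem_coe, Finset.mem_filter] at hy
    rw [Finset.mem_coe, Finset.mem_powersetCard_univ]
    rw [← hy.2]
    rfl
  have hfib : ∀ s ∈ univ.powersetCard i,
      ((univ.filter (fun y => hammingDist x y = i)).filter
        (fun y => univ.filter (fun j => x j ≠ y j) = s))
      = Fintype.piFinset (fun j => if j ∈ s then (univ : Finset F).erase (x j) else {x j}) := by
    intro s hs
    rw [Finset.mem_powersetCard_univ] at hs
    ext y
    simp only [Finset.mem_filter, Fintype.mem_piFinset, Finset.mem_univ, true_and]
    constructor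
    · rintro ⟨-, rfl⟩
      intro j
      by_cases hj : x j ≠ y j <;> simp [hj, Finset.mem_erase, Ne.symm, eq_comm] <;> tauto
    · intro h
      have hset : univ.filter (fun j => x j ≠ y j) = s := by
        ext j
        have := h j
        by_cases hj : j ∈ s <;> simp [hj] at this ⊢ <;> tauto
      refine ⟨?_, hset⟩
      show (univ.filter (fun j => x j ≠ y j)).card = i
      rw [hset, hs]
  rw [Finset.sum_congr rfl (fun s hs => by rw [hfib s hs])]
  have hcard : ∀ s ∈ univ.powersetCard i,
      (Fintype.piFinset (fun j => if j ∈ s then (univ : Finset F).erase (x j) else {x j})).card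
      = (Fintype.card F - 1) ^ i := by
    intro s hs
    rw [Finset.mem_powersetCard_univ] at hs
    rw [Fintype.card_piFinset]
    have : ∀ j, ((if j ∈ s then (univ : Finset F).erase (x j) else {x j}).card)
        = if j ∈ s then (Fintype.card F - 1) else 1 := by
      intro j; split <;> simp [Finset.card_erase_of_mem]
    simp_rw [this]
    rw [Finset.prod_ite_mem, Finset.univ_inter, Finset.prod_const, hs]
  rw [Finset.sum_congr rfl hcard, Finset.sum_const, Finset.card_powersetCard, Finset.card_univ,
    Fintype.card_fin, smul_eq_mul]


lemma ball_card (x : Fin n → F) (d : ℕ) (hd : 1 ≤ d) :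
    ((univ : Finset (Fin n → F)).filter (fun y => hammingDist x y ≤ d - 1)).card
      = hammingBallSize (Fintype.card F) n d := by
  rw [Finset.card_eq_sum_card_fiberwise
    (f := hammingDist x) (t := Finset.range d) ?h]
  case h =>
    intro y hy
    rw [Finset.mem_coe, Finset.mem_filter] at hy
    rw [Finset.mem_coe, Finset.mem_range]
    omega
  unfold hammingBallSize
  refine Finset.sum_congr rfl fun i hi => ?_
  rw [Finset.mem_range] at hi
  rw [← sphere_card x i]
  congr 1
  ext y
  simp only [Finset.mem_filter, Finset.mem_univ, true_and]
  constructor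
  · rintro ⟨-, h⟩; exact h
  · intro h; exact ⟨by omega, h⟩

lemma nbr_card (x : Fin n → F) (d : ℕ) (hd : 1 ≤ d) :
    ((univ : Finset (Fin n → F)).filter (fun y => y ≠ x ∧ hammingDist x y ≤ d - 1)).card
      = hammingBallSize (Fintype.card F) n d - 1 := by
  rw [← ball_card x d hd]
  have : (univ : Finset (Fin n → F)).filter (fun y => y ≠ x ∧ hammingDist x y ≤ d - 1)
      = ((univ : Finset (Fin n → F)).filter (fun y => hammingDist x y ≤ d - 1)).erase x := by
    ext y
    simp only [Finset.mem_filter, Finset.mem_erase, Finset.mem_univ, true_and]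
  rw [this, Finset.card_erase_of_mem (by simp)]

lemma count_supersets {V : Type} [Fintype V] [DecidableEq V] (g : Finset V) (S : ℕ)
    (hk : g.card ≤ S) :
    (((univ : Finset V).powersetCard S).filter (fun C => g ⊆ C)).card
      = (Fintype.card V - g.card).choose (S - g.card) := by
  have key : (((univ : Finset V).powersetCard S).filter (fun C => g ⊆ C)).card
      = (gᶜ.powersetCard (S - g.card)).card := by
    refine Finset.card_bij' (fun C _ => C \ g) (fun D _ => D ∪ g) ?_ ?_ ?_ ?_
    · intro C hC
      simp only [Finset.mem_filter, Finset.mem_powersetCard_univ] at hC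
      rw [Finset.mem_powersetCard]
      constructor
      · intro x hx
        simp only [Finset.mem_sdiff] at hx
        simp [Finset.mem_compl, hx.2]
      · rw [Finset.card_sdiff_of_subset hC.2, hC.1]
    · intro D hD
      rw [Finset.mem_powersetCard] at hD
      have hdisj : Disjoint D g := by
        rw [Finset.disjoint_right]
        intro x hx hxD
        have := hD.1 hxD
        simp [Finset.mem_compl, hx] at this
      simp only [Finset.mem_filter, Finset.mem_powersetCard_univ]
      constructor
      · rw [Finset.card_union_of_disjoint hdisj, hD.2]
        omega
      · exact Finset.subset_union_right
    · intro C hC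
      simp only [Finset.mem_filter, Finset.mem_powersetCard_univ] at hC
      exact Finset.sdiff_union_of_subset hC.2
    · intro D hD
      rw [Finset.mem_powersetCard] at hD
      apply Finset.union_sdiff_cancel_right
      rw [Finset.disjoint_right]
      intro x hx hxD
      have := hD.1 hxD
      simp [Finset.mem_compl, hx] at this
  rw [key, Finset.card_powersetCard, Finset.card_compl]

lemma pairs_card (d : ℕ) (hd : 1 ≤ d) :
    ((univ : Finset ((Fin n → F) × (Fin n → F))).filter
        (fun p => p.1 ≠ p.2 ∧ hammingDist p.1 p.2 ≤ d - 1)).card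
      = Fintype.card (Fin n → F) * (hammingBallSize (Fintype.card F) n d - 1) := by
  rw [Finset.card_eq_sum_card_fiberwise (f := Prod.fst) (t := univ) (fun p _ => mem_univ p.1)]
  have hfib : ∀ x : Fin n → F,
      ((((univ : Finset ((Fin n → F) × (Fin n → F))).filter
        (fun p => p.1 ≠ p.2 ∧ hammingDist p.1 p.2 ≤ d - 1)).filter
        (fun p => p.1 = x)).card)
      = hammingBallSize (Fintype.card F) n d - 1 := by
    intro x
    rw [← nbr_card x d hd]
    refine Finset.card_bij' (fun p _ => p.2) (fun y _ => (x, y)) ?_ ?_ ?_ ?_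
    · intro p hp
      simp only [Finset.mem_filter, Finset.mem_univ, true_and] at hp ⊢
      obtain ⟨⟨h1, h2⟩, h3⟩ := hp
      subst h3
      exact ⟨fun h => h1 h.symm, h2⟩
    · intro y hy
      simp only [Finset.mem_filter, Finset.mem_univ, true_and] at hy ⊢
      exact ⟨⟨fun h => hy.1 h.symm, hy.2⟩, trivial⟩
    · intro p hp
      simp only [Finset.mem_filter] at hp
      exact Prod.ext hp.2.symm rfl
    · intro y hy
      rfl
  rw [Finset.sum_congr rfl (fun x _ => hfib x), Finset.sum_const, Finset.card_univ, smul_eq_mul]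

lemma swap_sum {α β : Type*} [DecidableEq α] [DecidableEq β] (s : Finset α) (t : Finset β)
    (P : α → β → Prop) [∀ a b, Decidable (P a b)] :
    ∑ a ∈ s, (t.filter (fun b => P a b)).card
      = ∑ b ∈ t, (s.filter (fun a => P a b)).card := by
  simp_rw [Finset.card_filter]
  exact Finset.sum_comm


lemma per_p1 {V : Type} [Fintype V] [DecidableEq V] (R : V → V → Prop) [DecidableRel R]
    (hsymm : ∀ u v, R u v → R v u)
    (E' : Finset (V × V)) (hE' : E' = univ.filter (fun p => p.1 ≠ p.2 ∧ R p.1 p.2))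
    (bb : ℕ) (hnbr : ∀ x : V, (univ.filter (fun v => v ≠ x ∧ R x v)).card = bb - 1)
    (x y : V) (hxy : (x, y) ∈ E') (f : ℕ → ℕ) :
    ∃ n3 n4 : ℕ, (∑ p2 ∈ E', f ((insert x (insert y (insert p2.1 ({p2.2} : Finset V)))).card))
        = 2 * f 2 + n3 * f 3 + n4 * f 4 ∧ n3 ≤ 4 * (bb - 2) ∧ 2 + n3 + n4 = E'.card := by
  have hmemE' : ∀ p : V × V, p ∈ E' ↔ p.1 ≠ p.2 ∧ R p.1 p.2 := by
    intro p; rw [hE']; simp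
  obtain ⟨hne, hR⟩ := (hmemE' (x, y)).1 hxy
  simp only at hne hR
  set u : V × V → ℕ := fun p2 => (insert x (insert y (insert p2.1 ({p2.2} : Finset V)))).card with hu
  have humem : ∀ p2 ∈ E', u p2 ∈ ({2, 3, 4} : Finset ℕ) := by
    intro p2 hp2
    have h2 : 2 ≤ u p2 := by
      have : ({x, y} : Finset V) ⊆ insert x (insert y (insert p2.1 ({p2.2} : Finset V))) := by
        intro a ha; simp at ha ⊢; tauto
      calc 2 = ({x, y} : Finset V).card := (Finset.card_pair hne).symm
        _ ≤ _ := Finset.card_le_card this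
    have h4 : u p2 ≤ 4 := by
      calc u p2 ≤ (insert y (insert p2.1 ({p2.2} : Finset V))).card + 1 := Finset.card_insert_le _ _
        _ ≤ ((insert p2.1 ({p2.2} : Finset V)).card + 1) + 1 := by
            have := Finset.card_insert_le y (insert p2.1 ({p2.2} : Finset V)); omega
        _ ≤ (({p2.2} : Finset V).card + 1 + 1) + 1 := by
            have := Finset.card_insert_le p2.1 ({p2.2} : Finset V); omega
        _ = 4 := by simp
    simp only [Finset.mem_insert, Finset.mem_singleton]
    omega
  have hsum : ∑ p2 ∈ E', f (u p2)
      = ∑ k ∈ ({2, 3, 4} : Finset ℕ), ∑ p2 ∈ E'.filter (fun p2 => u p2 = k), f (u p2) :=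
    (Finset.sum_fiberwise_of_maps_to humem _).symm
  have hconst : ∀ k ∈ ({2, 3, 4} : Finset ℕ),
      ∑ p2 ∈ E'.filter (fun p2 => u p2 = k), f (u p2)
        = (E'.filter (fun p2 => u p2 = k)).card * f k := by
    intro k _
    rw [Finset.sum_congr rfl (fun p2 hp2 => by
      rw [(Finset.mem_filter.1 hp2).2]), Finset.sum_const, smul_eq_mul]
  rw [hsum, Finset.sum_congr rfl hconst]
  have hexp : ∀ g : ℕ → ℕ, ∑ k ∈ ({2, 3, 4} : Finset ℕ), g k = g 2 + g 3 + g 4 := by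
    intro g
    rw [show ({2, 3, 4} : Finset ℕ) = insert 2 (insert 3 {4}) from rfl,
      Finset.sum_insert (by decide), Finset.sum_insert (by decide), Finset.sum_singleton]
    ring
  rw [hexp]
  have hpart : E'.card = ∑ k ∈ ({2, 3, 4} : Finset ℕ), (E'.filter (fun p2 => u p2 = k)).card :=
    Finset.card_eq_sum_card_fiberwise humem
  rw [hexp] at hpart
  -- fiber 2 card
  have hf2 : (E'.filter (fun p2 => u p2 = 2)) = {(x, y), (y, x)} := by
    ext p
    simp only [Finset.mem_filter, Finset.mem_insert, Finset.mem_singleton]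
    constructor
    · rintro ⟨hp, hu2⟩
      obtain ⟨hpne, hpR⟩ := (hmemE' p).1 hp
      have hsub : ({x, y} : Finset V) ⊆ insert x (insert y (insert p.1 ({p.2} : Finset V))) := by
        intro a ha; simp at ha ⊢; tauto
      have heq : ({x, y} : Finset V) = insert x (insert y (insert p.1 ({p.2} : Finset V))) := by
        apply Finset.eq_of_subset_of_card_le hsub
        rw [Finset.card_pair hne]
        exact le_of_eq hu2
      have hp1 : p.1 ∈ ({x, y} : Finset V) := by rw [heq]; simp
      have hp2 : p.2 ∈ ({x, y} : Finset V) := by rw [heq]; simp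
      simp only [Finset.mem_insert, Finset.mem_singleton] at hp1 hp2
      rcases hp1 with h1 | h1 <;> rcases hp2 with h2 | h2
      · exact absurd (h1.trans h2.symm) hpne
      · left; exact Prod.ext h1 h2
      · right; exact Prod.ext h1 h2
      · exact absurd (h1.trans h2.symm) hpne
    · rintro (rfl | rfl)
      · refine ⟨hxy, ?_⟩
        show (insert x (insert y (insert x ({y} : Finset V)))).card = 2
        rw [show insert x (insert y (insert x ({y} : Finset V))) = {x, y} by
          ext a; simp only [Finset.mem_insert, Finset.mem_singleton]; tauto]
        exact Finset.card_pair hne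
      · refine ⟨(hmemE' (y, x)).2 ⟨Ne.symm hne, hsymm _ _ hR⟩, ?_⟩
        show (insert x (insert y (insert y ({x} : Finset V)))).card = 2
        rw [show insert x (insert y (insert y ({x} : Finset V))) = {x, y} by
          ext a; simp only [Finset.mem_insert, Finset.mem_singleton]; tauto]
        exact Finset.card_pair hne
  have hc2 : (E'.filter (fun p2 => u p2 = 2)).card = 2 := by
    rw [hf2, Finset.card_insert_of_notMem (by simp [Prod.ext_iff]; intro h; exact fun _ => hne h),
      Finset.card_singleton]
  have hcard_filter : ∀ a c : V, a ≠ c → R a c →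
      (E'.filter (fun p => p.1 = a ∧ p.2 ≠ c)).card ≤ bb - 2 ∧
      (E'.filter (fun p => p.2 = a ∧ p.1 ≠ c)).card ≤ bb - 2 := by
    intro a c hac hRac
    have hcN : ((univ.filter (fun v => v ≠ a ∧ R a v)).erase c).card = bb - 2 := by
      rw [Finset.card_erase_of_mem (by simp [Ne.symm hac, hRac]), hnbr a]
      omega
    constructor
    · rw [← hcN]
      apply Finset.card_le_card_of_injOn Prod.snd
      · intro p hp
        simp only [Finset.mem_coe, Finset.mem_filter] at hp
        obtain ⟨hpE, h1, h2⟩ := hp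
        obtain ⟨hpne, hpR⟩ := (hmemE' p).1 hpE
        simp only [Finset.mem_coe, Finset.mem_erase, Finset.mem_filter, Finset.mem_univ, true_and]
        exact ⟨h2, fun hh => hpne (by rw [h1, hh]), by rw [← h1]; exact hpR⟩
      · intro p hp q hq hpq
        simp only [Finset.coe_filter, Set.mem_setOf_eq] at hp hq
        exact Prod.ext (hp.2.1.trans hq.2.1.symm) hpq
    · rw [← hcN]
      apply Finset.card_le_card_of_injOn Prod.fst
      · intro p hp
        simp only [Finset.mem_coe, Finset.mem_filter] at hp
        obtain ⟨hpE, h1, h2⟩ := hp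
        obtain ⟨hpne, hpR⟩ := (hmemE' p).1 hpE
        simp only [Finset.mem_coe, Finset.mem_erase, Finset.mem_filter, Finset.mem_univ, true_and]
        exact ⟨h2, fun hh => hpne (by rw [h1, hh]), hsymm _ _ (by rw [← h1]; exact hpR)⟩
      · intro p hp q hq hpq
        simp only [Finset.coe_filter, Set.mem_setOf_eq] at hp hq
        exact Prod.ext hpq (hp.2.1.trans hq.2.1.symm)
  have hu_xy : u (x, y) = 2 := by
    show (insert x (insert y (insert x ({y} : Finset V)))).card = 2
    rw [show insert x (insert y (insert x ({y} : Finset V))) = {x, y} by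
      ext a; simp only [Finset.mem_insert, Finset.mem_singleton]; tauto]
    exact Finset.card_pair hne
  have hu_yx : u (y, x) = 2 := by
    show (insert x (insert y (insert y ({x} : Finset V)))).card = 2
    rw [show insert x (insert y (insert y ({x} : Finset V))) = {x, y} by
      ext a; simp only [Finset.mem_insert, Finset.mem_singleton]; tauto]
    exact Finset.card_pair hne
  have hsub3 : E'.filter (fun p2 => u p2 = 3) ⊆
      ((E'.filter (fun p => p.1 = x ∧ p.2 ≠ y)) ∪ (E'.filter (fun p => p.1 = y ∧ p.2 ≠ x))) ∪
      ((E'.filter (fun p => p.2 = x ∧ p.1 ≠ y)) ∪ (E'.filter (fun p => p.2 = y ∧ p.1 ≠ x))) := by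
    intro p hp
    simp only [Finset.mem_filter] at hp
    obtain ⟨hpE, hu3⟩ := hp
    obtain ⟨hpne, hpR⟩ := (hmemE' p).1 hpE
    simp only [Finset.mem_union, Finset.mem_filter]
    by_cases h1x : p.1 = x
    · by_cases h2y : p.2 = y
      · exfalso
        have : u p = 2 := by rw [show p = (x, y) from Prod.ext h1x h2y]; exact hu_xy
        omega
      · exact Or.inl (Or.inl ⟨hpE, h1x, h2y⟩)
    · by_cases h1y : p.1 = y
      · by_cases h2x : p.2 = x
        · exfalso
          have : u p = 2 := by rw [show p = (y, x) from Prod.ext h1y h2x]; exact hu_yx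
          omega
        · exact Or.inl (Or.inr ⟨hpE, h1y, h2x⟩)
      · by_cases h2x : p.2 = x
        · exact Or.inr (Or.inl ⟨hpE, h2x, h1y⟩)
        · by_cases h2y : p.2 = y
          · exact Or.inr (Or.inr ⟨hpE, h2y, h1x⟩)
          · exfalso
            have : u p = 4 := by
              show (insert x (insert y (insert p.1 ({p.2} : Finset V)))).card = 4
              rw [Finset.card_insert_of_notMem (by
                  simp only [Finset.mem_insert, Finset.mem_singleton]
                  push_neg
                  exact ⟨hne, fun h => h1x h.symm, fun h => h2x h.symm⟩),
                Finset.card_insert_of_notMem (by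
                  simp only [Finset.mem_insert, Finset.mem_singleton]
                  push_neg
                  exact ⟨fun h => h1y h.symm, fun h => h2y h.symm⟩),
                Finset.card_insert_of_notMem (by
                  simp only [Finset.mem_singleton]
                  exact hpne),
                Finset.card_singleton]
            omega
  have hc3 : (E'.filter (fun p2 => u p2 = 3)).card ≤ 4 * (bb - 2) := by
    have h1 := (hcard_filter x y hne hR).1
    have h2 := (hcard_filter y x (Ne.symm hne) (hsymm _ _ hR)).1
    have h3 := (hcard_filter x y hne hR).2
    have h4 := (hcard_filter y x (Ne.symm hne) (hsymm _ _ hR)).2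
    have := Finset.card_le_card hsub3
    have hu1 := Finset.card_union_le
      ((E'.filter (fun p => p.1 = x ∧ p.2 ≠ y)) ∪ (E'.filter (fun p => p.1 = y ∧ p.2 ≠ x)))
      ((E'.filter (fun p => p.2 = x ∧ p.1 ≠ y)) ∪ (E'.filter (fun p => p.2 = y ∧ p.1 ≠ x)))
    have hu2 := Finset.card_union_le
      (E'.filter (fun p => p.1 = x ∧ p.2 ≠ y)) (E'.filter (fun p => p.1 = y ∧ p.2 ≠ x))
    have hu3 := Finset.card_union_le
      (E'.filter (fun p => p.2 = x ∧ p.1 ≠ y)) (E'.filter (fun p => p.2 = y ∧ p.1 ≠ x))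
    omega
  refine ⟨(E'.filter (fun p2 => u p2 = 3)).card, (E'.filter (fun p2 => u p2 = 4)).card,
    by rw [hc2], hc3, by omega⟩


lemma first_moment {V : Type} [Fintype V] [DecidableEq V] (E' : Finset (V × V))
    (hE : ∀ p ∈ E', p.1 ≠ p.2) (S : ℕ) (hS : 2 ≤ S) :
    ∑ C ∈ (univ : Finset V).powersetCard S, (E'.filter (fun p => p.1 ∈ C ∧ p.2 ∈ C)).card
      = E'.card * (Fintype.card V - 2).choose (S - 2) := by
  rw [swap_sum]
  rw [Finset.sum_congr rfl (fun p hp => ?_), Finset.sum_const, smul_eq_mul]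
  have hcond : ∀ C : Finset V, (p.1 ∈ C ∧ p.2 ∈ C) ↔ ({p.1, p.2} : Finset V) ⊆ C := by
    intro C
    simp [Finset.insert_subset_iff]
  have hcard : ({p.1, p.2} : Finset V).card = 2 := Finset.card_pair (hE p hp)
  calc ((((univ : Finset V).powersetCard S).filter (fun C => p.1 ∈ C ∧ p.2 ∈ C)).card)
      = ((((univ : Finset V).powersetCard S).filter
          (fun C => ({p.1, p.2} : Finset V) ⊆ C)).card) := by
        congr 1
        exact Finset.filter_congr fun C _ => by rw [hcond C]
    _ = (Fintype.card V - 2).choose (S - 2) := by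
        rw [count_supersets _ _ (by omega), hcard]

lemma second_moment_expand {V : Type} [Fintype V] [DecidableEq V] (E' : Finset (V × V))
    (S : ℕ) :
    ∑ C ∈ (univ : Finset V).powersetCard S, ((E'.filter (fun p => p.1 ∈ C ∧ p.2 ∈ C)).card) ^ 2
      = ∑ p1 ∈ E', ∑ p2 ∈ E', (((univ : Finset V).powersetCard S).filter
          (fun C => insert p1.1 (insert p1.2 (insert p2.1 ({p2.2} : Finset V))) ⊆ C)).card := by
  have h1 : ∀ C : Finset V, ((E'.filter (fun p => p.1 ∈ C ∧ p.2 ∈ C)).card) ^ 2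
      = ((E' ×ˢ E').filter
          (fun pp => (pp.1.1 ∈ C ∧ pp.1.2 ∈ C) ∧ (pp.2.1 ∈ C ∧ pp.2.2 ∈ C))).card := by
    intro C
    rw [sq, ← Finset.card_product]
    congr 1
    exact (Finset.filter_product (fun a : V × V => a.1 ∈ C ∧ a.2 ∈ C)
      (fun a : V × V => a.1 ∈ C ∧ a.2 ∈ C)).symm
  rw [Finset.sum_congr rfl (fun C _ => h1 C), swap_sum, Finset.sum_product]
  refine Finset.sum_congr rfl fun p1 _ => Finset.sum_congr rfl fun p2 _ => ?_
  congr 1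
  refine Finset.filter_congr fun C _ => ?_
  simp only [Finset.insert_subset_iff, Finset.singleton_subset_iff]
  tauto

lemma inner_bound {V : Type} [Fintype V] [DecidableEq V] (R : V → V → Prop) [DecidableRel R]
    (hsymm : ∀ u v, R u v → R v u)
    (E' : Finset (V × V)) (hE' : E' = univ.filter (fun p => p.1 ≠ p.2 ∧ R p.1 p.2))
    (bb : ℕ) (hnbr : ∀ x : V, (univ.filter (fun v => v ≠ x ∧ R x v)).card = bb - 1)
    (S : ℕ) (hS : 4 ≤ S) (p1 : V × V) (hp1 : p1 ∈ E') :
    ∃ n3 n4 : ℕ,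
      ∑ p2 ∈ E', (((univ : Finset V).powersetCard S).filter
          (fun C => insert p1.1 (insert p1.2 (insert p2.1 ({p2.2} : Finset V))) ⊆ C)).card
        = 2 * (Fintype.card V - 2).choose (S - 2) + n3 * (Fintype.card V - 3).choose (S - 3)
            + n4 * (Fintype.card V - 4).choose (S - 4)
        ∧ n3 ≤ 4 * (bb - 2) ∧ 2 + n3 + n4 = E'.card := by
  have hrw : ∀ p2 : V × V,
      (((univ : Finset V).powersetCard S).filter
          (fun C => insert p1.1 (insert p1.2 (insert p2.1 ({p2.2} : Finset V))) ⊆ C)).card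
      = (fun k => (Fintype.card V - k).choose (S - k))
          ((insert p1.1 (insert p1.2 (insert p2.1 ({p2.2} : Finset V)))).card) := by
    intro p2
    apply count_supersets
    calc (insert p1.1 (insert p1.2 (insert p2.1 ({p2.2} : Finset V)))).card
        ≤ (insert p1.2 (insert p2.1 ({p2.2} : Finset V))).card + 1 := Finset.card_insert_le _ _
      _ ≤ ((insert p2.1 ({p2.2} : Finset V)).card + 1) + 1 := by
          have := Finset.card_insert_le p1.2 (insert p2.1 ({p2.2} : Finset V)); omega
      _ ≤ (({p2.2} : Finset V).card + 1 + 1) + 1 := by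
          have := Finset.card_insert_le p2.1 ({p2.2} : Finset V); omega
      _ ≤ S := by simp; omega
  rw [Finset.sum_congr rfl (fun p2 _ => hrw p2)]
  exact per_p1 R hsymm E' hE' bb hnbr p1.1 p1.2 (by simpa using hp1)
    (fun k => (Fintype.card V - k).choose (S - k))

end Aux


set_option maxHeartbeats 1000000 in
lemma master {V : Type} [Fintype V] [DecidableEq V] (R : V → V → Prop) [DecidableRel R]
    (hsymm : ∀ u v, R u v → R v u) (S bb : ℕ)
    (hS : 4 ≤ S) (hSQ : S ≤ Fintype.card V) (hbb : 3 ≤ bb)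
    (hnbr : ∀ x : V, (univ.filter (fun v => v ≠ x ∧ R x v)).card = bb - 1)
    (hE : ((univ : Finset (V × V)).filter (fun p => p.1 ≠ p.2 ∧ R p.1 p.2)).card
      = Fintype.card V * (bb - 1))
    (Ω : ℝ)
    (hΩeq : Ω = 1 + (2 * (bb : ℝ) - 4) * ((S : ℝ) - 2) / ((Fintype.card V : ℝ) - 2)
        + ((Fintype.card V : ℝ) * ((bb : ℝ) - 1) / 2 - 2 * (bb : ℝ) + 3)
          * (((S : ℝ) - 2) * ((S : ℝ) - 3))
          / (((Fintype.card V : ℝ) - 2) * ((Fintype.card V : ℝ) - 3))) :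
    ((((univ : Finset V).powersetCard S).filter
        (fun C => ∃ x ∈ C, ∃ y ∈ C, x ≠ y ∧ R x y)).card : ℝ)
      ≥ (Fintype.card V : ℝ) * ((bb : ℝ) - 1)
          * (((Fintype.card V - 2).choose (S - 2) : ℕ) : ℝ) / (2 * Ω) := by
  classical
  have hQ4 : 4 ≤ Fintype.card V := le_trans hS hSQ
  set Qn := Fintype.card V with hQn
  -- real abbreviations
  set Q : ℝ := (Qn : ℝ) with hQ
  set B : ℝ := (bb : ℝ) with hB
  set Sr : ℝ := (S : ℝ) with hSr
  have hQ4R : (4 : ℝ) ≤ Q := by rw [hQ]; exact_mod_cast hQ4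
  have hS4R : (4 : ℝ) ≤ Sr := by rw [hSr]; exact_mod_cast hS
  have hSQR : Sr ≤ Q := by rw [hSr, hQ]; exact_mod_cast hSQ
  have hB3R : (3 : ℝ) ≤ B := by rw [hB]; exact_mod_cast hbb
  -- choose values
  have hf2pos : 0 < (Qn - 2).choose (S - 2) := Nat.choose_pos (by omega)
  set F2 : ℝ := (((Qn - 2).choose (S - 2) : ℕ) : ℝ) with hF2
  set F3 : ℝ := (((Qn - 3).choose (S - 3) : ℕ) : ℝ) with hF3
  set F4 : ℝ := (((Qn - 4).choose (S - 4) : ℕ) : ℝ) with hF4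
  have hF2pos : 0 < F2 := by rw [hF2]; exact_mod_cast hf2pos
  have hF3nn : 0 ≤ F3 := by rw [hF3]; positivity
  have hF4nn : 0 ≤ F4 := by rw [hF4]; positivity
  -- choose identities
  have hch3 : (Q - 2) * F3 = F2 * (Sr - 2) := by
    have h := Nat.add_one_mul_choose_eq (Qn - 3) (S - 3)
    rw [show Qn - 3 + 1 = Qn - 2 by omega, show S - 3 + 1 = S - 2 by omega] at h
    have h' := congrArg (Nat.cast : ℕ → ℝ) h
    rw [Nat.cast_mul, Nat.cast_mul, Nat.cast_sub (show 2 ≤ Qn by omega),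
      Nat.cast_sub (show 2 ≤ S by omega)] at h'
    push_cast at h'
    rw [hQ, hF3, hF2, hSr]
    linarith
  have hch4 : (Q - 3) * F4 = F3 * (Sr - 3) := by
    have h := Nat.add_one_mul_choose_eq (Qn - 4) (S - 4)
    rw [show Qn - 4 + 1 = Qn - 3 by omega, show S - 4 + 1 = S - 3 by omega] at h
    have h' := congrArg (Nat.cast : ℕ → ℝ) h
    rw [Nat.cast_mul, Nat.cast_mul, Nat.cast_sub (show 3 ≤ Qn by omega),
      Nat.cast_sub (show 3 ≤ S by omega)] at h'
    push_cast at h'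
    rw [hQ, hF3, hF4, hSr]
    linarith
  have hf43 : F4 ≤ F3 := by
    have h : (Qn - 3).choose (S - 3) = (Qn - 4).choose (S - 4) + (Qn - 4).choose (S - 3) := by
      rw [show Qn - 3 = (Qn - 4) + 1 by omega, show S - 3 = (S - 4) + 1 by omega]
      exact Nat.choose_succ_succ _ _
    rw [hF3, hF4, h]
    push_cast
    exact le_add_of_nonneg_right (by positivity)
  -- edge set
  set E' := (univ : Finset (V × V)).filter (fun p => p.1 ≠ p.2 ∧ R p.1 p.2) with hE'def
  have hmemE' : ∀ p, p ∈ E' ↔ p.1 ≠ p.2 ∧ R p.1 p.2 := by intro p; rw [hE'def]; simp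
  have hEne : ∀ p ∈ E', p.1 ≠ p.2 := fun p hp => ((hmemE' p).1 hp).1
  have hT1 := first_moment E' hEne S (by omega)
  set Bad := ((univ : Finset V).powersetCard S).filter
    (fun C => ∃ x ∈ C, ∃ y ∈ C, x ≠ y ∧ R x y) with hBaddef
  have hXzero : ∀ C ∈ ((univ : Finset V).powersetCard S).filter
      (fun C => ¬ ∃ x ∈ C, ∃ y ∈ C, x ≠ y ∧ R x y),
      (E'.filter (fun p => p.1 ∈ C ∧ p.2 ∈ C)).card = 0 := by
    intro C hC
    rw [Finset.mem_filter] at hC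
    rw [Finset.card_eq_zero, Finset.filter_eq_empty_iff]
    intro p hp hmem
    obtain ⟨h1, h2⟩ := (hmemE' p).1 hp
    exact hC.2 ⟨p.1, hmem.1, p.2, hmem.2, h1, h2⟩
  have hsplit : ∑ C ∈ Bad, (E'.filter (fun p => p.1 ∈ C ∧ p.2 ∈ C)).card
      = ∑ C ∈ (univ : Finset V).powersetCard S,
          (E'.filter (fun p => p.1 ∈ C ∧ p.2 ∈ C)).card := by
    rw [← Finset.sum_filter_add_sum_filter_not ((univ : Finset V).powersetCard S)
      (fun C => ∃ x ∈ C, ∃ y ∈ C, x ≠ y ∧ R x y)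
      (fun C => (E'.filter (fun p => p.1 ∈ C ∧ p.2 ∈ C)).card),
      Finset.sum_eq_zero hXzero, add_zero]
  have hE'R : (E'.card : ℝ) = Q * (B - 1) := by
    rw [hE, Nat.cast_mul, Nat.cast_sub (show 1 ≤ bb by omega)]
    push_cast
    rw [hQ, hB]
  have hT1R : ∑ C ∈ Bad, ((E'.filter (fun p => p.1 ∈ C ∧ p.2 ∈ C)).card : ℝ)
      = Q * (B - 1) * F2 := by
    have h := congrArg (Nat.cast : ℕ → ℝ) (hsplit.trans hT1)
    rw [Nat.cast_sum, Nat.cast_mul] at h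
    rw [h, hE'R, hF2]
  -- Cauchy-Schwarz
  have hCS : (∑ C ∈ Bad, ((E'.filter (fun p => p.1 ∈ C ∧ p.2 ∈ C)).card : ℝ)) ^ 2
      ≤ (Bad.card : ℝ) * ∑ C ∈ Bad, ((E'.filter (fun p => p.1 ∈ C ∧ p.2 ∈ C)).card : ℝ) ^ 2 := by
    have h := Finset.sum_mul_sq_le_sq_mul_sq Bad (fun _ => (1 : ℝ))
      (fun C => ((E'.filter (fun p => p.1 ∈ C ∧ p.2 ∈ C)).card : ℝ))
    simpa using h
  have hmono : ∑ C ∈ Bad, ((E'.filter (fun p => p.1 ∈ C ∧ p.2 ∈ C)).card : ℝ) ^ 2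
      ≤ ∑ C ∈ (univ : Finset V).powersetCard S,
          ((E'.filter (fun p => p.1 ∈ C ∧ p.2 ∈ C)).card : ℝ) ^ 2 := by
    apply Finset.sum_le_sum_of_subset_of_nonneg (Finset.filter_subset _ _)
    intro C _ _
    positivity
  -- second moment bound
  have hT2R : ∑ C ∈ (univ : Finset V).powersetCard S,
      ((E'.filter (fun p => p.1 ∈ C ∧ p.2 ∈ C)).card : ℝ) ^ 2
      ≤ Q * (B - 1) * (2 * F2 * Ω) := by
    have hcast : ∑ C ∈ (univ : Finset V).powersetCard S,
        ((E'.filter (fun p => p.1 ∈ C ∧ p.2 ∈ C)).card : ℝ) ^ 2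
        = ∑ p1 ∈ E', ((∑ p2 ∈ E', (((univ : Finset V).powersetCard S).filter
            (fun C => insert p1.1 (insert p1.2 (insert p2.1 ({p2.2} : Finset V))) ⊆ C)).card : ℕ)
              : ℝ) := by
      have h := congrArg (Nat.cast : ℕ → ℝ) (second_moment_expand E' S)
      rw [Nat.cast_sum] at h
      push_cast at h ⊢
      exact h
    rw [hcast]
    have hbound : ∀ p1 ∈ E', ((∑ p2 ∈ E', (((univ : Finset V).powersetCard S).filter
            (fun C => insert p1.1 (insert p1.2 (insert p2.1 ({p2.2} : Finset V))) ⊆ C)).card : ℕ)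
              : ℝ)
        ≤ 2 * F2 + (4 * B - 8) * F3 + (Q * (B - 1) - 2 - (4 * B - 8)) * F4 := by
      intro p1 hp1
      obtain ⟨n3, n4, heq, hn3, hsum⟩ := inner_bound R hsymm E' hE'def bb hnbr S hS p1 hp1
      rw [heq]
      have hn3R : (n3 : ℝ) ≤ 4 * B - 8 := by
        calc (n3 : ℝ) ≤ ((4 * (bb - 2) : ℕ) : ℝ) := by exact_mod_cast hn3
          _ = 4 * B - 8 := by
              rw [Nat.cast_mul, Nat.cast_sub (show 2 ≤ bb by omega)]
              push_cast
              rw [hB]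
              ring
      have hn4R : (n4 : ℝ) = Q * (B - 1) - 2 - (n3 : ℝ) := by
        have := congrArg (Nat.cast : ℕ → ℝ) hsum
        push_cast at this
        rw [hE'R] at this
        linarith
      push_cast
      rw [← hF2, ← hF3, ← hF4]
      nlinarith [mul_nonneg (sub_nonneg.2 hn3R) (sub_nonneg.2 hf43), hF4nn, hF3nn,
        (Nat.cast_nonneg n3 : (0:ℝ) ≤ (n3:ℝ))]
    calc ∑ p1 ∈ E', ((∑ p2 ∈ E', (((univ : Finset V).powersetCard S).filter
            (fun C => insert p1.1 (insert p1.2 (insert p2.1 ({p2.2} : Finset V))) ⊆ C)).card : ℕ)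
              : ℝ)
        ≤ ∑ p1 ∈ E', (2 * F2 + (4 * B - 8) * F3 + (Q * (B - 1) - 2 - (4 * B - 8)) * F4) :=
          Finset.sum_le_sum hbound
      _ = (E'.card : ℝ) * (2 * F2 + (4 * B - 8) * F3 + (Q * (B - 1) - 2 - (4 * B - 8)) * F4) := by
          rw [Finset.sum_const, nsmul_eq_mul]
      _ = Q * (B - 1) * (2 * F2 + (4 * B - 8) * F3 + (Q * (B - 1) - 2 - (4 * B - 8)) * F4) := by
          rw [hE'R]
      _ = Q * (B - 1) * (2 * F2 * Ω) := by
          have e3 : F3 = F2 * (Sr - 2) / (Q - 2) := by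
            rw [eq_div_iff (by linarith : Q - 2 ≠ 0)]
            linarith [hch3]
          have e4 : F4 = F3 * (Sr - 3) / (Q - 3) := by
            rw [eq_div_iff (by linarith : Q - 3 ≠ 0)]
            linarith [hch4]
          rw [hΩeq, e4, e3]
          have h2 : Q - 2 ≠ 0 := by linarith
          have h3 : Q - 3 ≠ 0 := by linarith
          field_simp
          ring
  -- positivity of Ω
  have hβ₀nn : (0 : ℝ) ≤ Q * (B - 1) / 2 - 2 * B + 3 := by nlinarith
  have hΩpos : 0 < Ω := by
    rw [hΩeq]
    have t1 : (0 : ℝ) ≤ (2 * B - 4) * (Sr - 2) / (Q - 2) := by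
      apply div_nonneg (mul_nonneg (by linarith) (by linarith)) (by linarith)
    have t2 : (0 : ℝ) ≤ (Q * (B - 1) / 2 - 2 * B + 3) * ((Sr - 2) * (Sr - 3))
        / ((Q - 2) * (Q - 3)) := by
      apply div_nonneg (mul_nonneg hβ₀nn (mul_nonneg (by linarith) (by linarith)))
      apply mul_nonneg (by linarith) (by linarith)
    linarith
  have hTpos : 0 < Q * (B - 1) * F2 :=
    mul_pos (mul_pos (by linarith) (by linarith)) hF2pos
  rw [ge_iff_le, div_le_iff₀ (by positivity)]
  have chain : (Q * (B - 1) * F2) * (Q * (B - 1) * F2)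
      ≤ ((Bad.card : ℝ) * (2 * Ω)) * (Q * (B - 1) * F2) := by
    calc (Q * (B - 1) * F2) * (Q * (B - 1) * F2)
        = (∑ C ∈ Bad, ((E'.filter (fun p => p.1 ∈ C ∧ p.2 ∈ C)).card : ℝ)) ^ 2 := by
          rw [hT1R]; ring
      _ ≤ (Bad.card : ℝ) * ∑ C ∈ Bad,
            ((E'.filter (fun p => p.1 ∈ C ∧ p.2 ∈ C)).card : ℝ) ^ 2 := hCS
      _ ≤ (Bad.card : ℝ) * (Q * (B - 1) * (2 * F2 * Ω)) := by
          apply mul_le_mul_of_nonneg_left (le_trans hmono hT2R) (Nat.cast_nonneg _)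
      _ = ((Bad.card : ℝ) * (2 * Ω)) * (Q * (B - 1) * F2) := by ring
  calc Q * (B - 1) * F2 ≤ (Bad.card : ℝ) * (2 * Ω) :=
        le_of_mul_le_mul_right chain hTpos
    _ = _ := by rw [hBaddef]


/-- Lower bound for the number of codes `C ⊆ F_q^n` with `|C| = S` and
minimum Hamming distance at most `d - 1`. -/
theorem stmt_5 (q n d S : ℕ) (hq : IsPrimePow q) (hd : 2 ≤ d) (hdn : d ≤ n)
    (hS : 4 ≤ S) (hSq : S ≤ q ^ n) (F : Type) [Field F] [Fintype F] [DecidableEq F]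
    (hF : Fintype.card F = q)
    (b : ℝ) (hb : b = (hammingBallSize q n d : ℝ))
    (β₀ β₁ Ω : ℝ)
    (hβ₀ : β₀ = (q : ℝ) ^ n * (b - 1) / 2 - 2 * b + 3)
    (hβ₁ : β₁ = 2 * b - 4)
    (hΩ : Ω = 1 + β₁ * ((S : ℝ) - 2) / ((q : ℝ) ^ n - 2)
        + β₀ * (((S : ℝ) - 2) * ((S : ℝ) - 3)) / ((((q : ℝ) ^ n - 2)) * ((q : ℝ) ^ n - 3))) :
    (Nat.card {C : Finset (Fin n → F) // C.card = S ∧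
        ∃ x ∈ C, ∃ y ∈ C, x ≠ y ∧ hammingDist x y ≤ d - 1} : ℝ)
      ≥ (q : ℝ) ^ n * (b - 1) * (Nat.choose (q ^ n - 2) (S - 2) : ℝ) / (2 * Ω) := by
  classical
  have hq2 : 2 ≤ q := by
    have h1 : 1 < Fintype.card F := Fintype.one_lt_card
    omega
  have hVcard : Fintype.card (Fin n → F) = q ^ n := by
    rw [Fintype.card_fun, hF, Fintype.card_fin]
  have hbb3 : 3 ≤ hammingBallSize q n d := by
    have hsub : Finset.range 2 ⊆ Finset.range d := Finset.range_subset_range.2 hd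
    have h2 : ∑ i ∈ Finset.range 2, Nat.choose n i * (q - 1) ^ i ≤ hammingBallSize q n d :=
      Finset.sum_le_sum_of_subset hsub
    have h3 : ∑ i ∈ Finset.range 2, Nat.choose n i * (q - 1) ^ i = 1 + n * (q - 1) := by
      simp [Finset.sum_range_succ]
    have h4 : n * 1 ≤ n * (q - 1) := Nat.mul_le_mul_left n (by omega)
    have hn2 : 2 ≤ n := le_trans hd hdn
    omega
  have hnbr : ∀ x : Fin n → F,
      ((univ : Finset (Fin n → F)).filter
        (fun v => v ≠ x ∧ hammingDist x v ≤ d - 1)).card = hammingBallSize q n d - 1 := by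
    intro x
    have h := nbr_card x d (by omega)
    rwa [hF] at h
  have hE : ((univ : Finset ((Fin n → F) × (Fin n → F))).filter
        (fun p => p.1 ≠ p.2 ∧ hammingDist p.1 p.2 ≤ d - 1)).card
      = Fintype.card (Fin n → F) * (hammingBallSize q n d - 1) := by
    have h := pairs_card (F := F) (n := n) d (by omega)
    rwa [hF] at h
  have H := master (fun u v : Fin n → F => hammingDist u v ≤ d - 1)
    (fun u v h => by show hammingDist v u ≤ d - 1; rw [hammingDist_comm]; exact h) S (hammingBallSize q n d)
    hS (by rwa [hVcard]) hbb3 hnbr hE Ω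
    (by rw [hΩ, hβ₁, hβ₀, hb, hVcard]; push_cast; ring)
  have hNat : (Nat.card {C : Finset (Fin n → F) // C.card = S ∧
        ∃ x ∈ C, ∃ y ∈ C, x ≠ y ∧ hammingDist x y ≤ d - 1})
      = (((univ : Finset (Fin n → F)).powersetCard S).filter
          (fun C => ∃ x ∈ C, ∃ y ∈ C, x ≠ y ∧ hammingDist x y ≤ d - 1)).card := by
    rw [Nat.card_eq_fintype_card, Fintype.card_subtype]
    congr 1
    ext C
    simp only [Finset.mem_filter, Finset.mem_univ, true_and, Finset.mem_powersetCard_univ]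
  rw [hNat, hb]
  rw [hVcard] at H
  push_cast at H ⊢
  exact H
end

section
/- Let 1 ≤ d ≤ k ≤ n − k. Every subspace code C ⊆ G_q(k,n) with minimum injection distance at least d satisfies |C| ≤ [n−d+1 choose n−k]_q. -/
/-- The `q`-binomial (Gaussian) coefficient `[m choose l]_q`. -/
def qbin (q : ℕ) : ℕ → ℕ → ℕ
  | _, 0 => 1
  | 0, _ + 1 => 0
  | m + 1, l + 1 => qbin q m l + q ^ (l + 1) * qbin q m (l + 1)

open Module Submodule

section QbinArith

lemma qbin_zero (q m : ℕ) : qbin q m 0 = 1 := by cases m <;> rfl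

lemma qbin_succ_succ (q m l : ℕ) :
    qbin q (m + 1) (l + 1) = qbin q m l + q ^ (l + 1) * qbin q m (l + 1) := rfl

lemma qbin_of_lt (q : ℕ) : ∀ m l : ℕ, m < l → qbin q m l = 0 := by
  intro m
  induction m with
  | zero => intro l hl; cases l with
    | zero => omega
    | succ l => rfl
  | succ m ih =>
    intro l hl
    cases l with
    | zero => omega
    | succ l =>
      rw [qbin_succ_succ, ih l (by omega), ih (l + 1) (by omega)]
      ring

lemma qbin_self (q : ℕ) : ∀ m : ℕ, qbin q m m = 1 := by
  intro m
  induction m with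
  | zero => rfl
  | succ m ih => rw [qbin_succ_succ, ih, qbin_of_lt q m (m + 1) (by omega)]; ring

lemma qbin_pascal (q : ℕ) : ∀ m l : ℕ, l ≤ m →
    qbin q (m + 1) (l + 1) = qbin q m (l + 1) + q ^ (m - l) * qbin q m l := by
  intro m
  induction m with
  | zero =>
    intro l hl
    interval_cases l
    norm_num [qbin_succ_succ, qbin_zero, qbin_of_lt q 0 1 Nat.zero_lt_one]
  | succ m ih =>
    intro l hl
    by_cases hcase : l = m + 1
    · subst hcase
      rw [qbin_self, qbin_of_lt q (m + 1) (m + 1 + 1) (by omega), Nat.sub_self]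
      rw [qbin_self]
      ring
    · have hlm : l ≤ m := by omega
      cases l with
      | zero =>
        have h0 := ih 0 (Nat.zero_le m)
        rw [Nat.sub_zero, qbin_zero, mul_one] at h0
        have e2 : qbin q (m + 1) (0 + 1) = 1 + q * qbin q m (0 + 1) := by
          rw [qbin_succ_succ, qbin_zero, pow_one]
        rw [Nat.sub_zero, qbin_zero, mul_one]
        calc qbin q (m + 1 + 1) (0 + 1)
            = 1 + q * qbin q (m + 1) (0 + 1) := by
              rw [qbin_succ_succ, qbin_zero, pow_one]
          _ = 1 + q * (qbin q m (0 + 1) + q ^ m) := by rw [h0]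
          _ = (1 + q * qbin q m (0 + 1)) + q ^ (m + 1) := by ring
          _ = qbin q (m + 1) (0 + 1) + q ^ (m + 1) := by rw [e2]
      | succ l' =>
        obtain ⟨j, rfl⟩ : ∃ j, m = l' + 1 + j := ⟨m - (l' + 1), by omega⟩
        have h1 := ih l' (by omega)
        have h2 := ih (l' + 1) (by omega)
        have s1 : l' + 1 + j - l' = j + 1 := by omega
        have s2 : l' + 1 + j - (l' + 1) = j := by omega
        have s3 : l' + 1 + j + 1 - (l' + 1) = j + 1 := by omega
        rw [s1] at h1
        rw [s2] at h2
        rw [s3]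
        calc qbin q (l' + 1 + j + 1 + 1) (l' + 1 + 1)
            = qbin q (l' + 1 + j + 1) (l' + 1)
                + q ^ (l' + 1 + 1) * qbin q (l' + 1 + j + 1) (l' + 1 + 1) :=
              qbin_succ_succ q (l' + 1 + j + 1) (l' + 1)
          _ = (qbin q (l' + 1 + j) (l' + 1) + q ^ (j + 1) * qbin q (l' + 1 + j) l')
                + q ^ (l' + 1 + 1) * (qbin q (l' + 1 + j) (l' + 1 + 1)
                  + q ^ j * qbin q (l' + 1 + j) (l' + 1)) := by rw [h1, h2]
          _ = (qbin q (l' + 1 + j) (l' + 1)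
                + q ^ (l' + 1 + 1) * qbin q (l' + 1 + j) (l' + 1 + 1))
                + q ^ (j + 1) * (qbin q (l' + 1 + j) l'
                  + q ^ (l' + 1) * qbin q (l' + 1 + j) (l' + 1)) := by ring
          _ = qbin q (l' + 1 + j + 1) (l' + 1 + 1)
                + q ^ (j + 1) * qbin q (l' + 1 + j + 1) (l' + 1) := by
              rw [qbin_succ_succ q (l' + 1 + j) (l' + 1),
                qbin_succ_succ q (l' + 1 + j) l']

lemma qbin_symm (q : ℕ) : ∀ m l : ℕ, l ≤ m → qbin q m l = qbin q m (m - l) := by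
  intro m
  induction m with
  | zero => intro l hl; interval_cases l; rfl
  | succ m ih =>
    intro l hl
    cases l with
    | zero => rw [qbin_zero, Nat.sub_zero, qbin_self]
    | succ l' =>
      by_cases hcase : l' + 1 = m + 1
      · rw [hcase, Nat.sub_self, qbin_self, qbin_zero]
      · have hl'm : l' < m := by omega
        have i1 : qbin q m l' = qbin q m (m - l') := ih l' (by omega)
        have i2 : qbin q m (l' + 1) = qbin q m (m - (l' + 1)) := ih (l' + 1) (by omega)
        have e : m + 1 - (l' + 1) = m - l' - 1 + 1 := by omega
        have e3 : m - (l' + 1) = m - l' - 1 := by omega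
        calc qbin q (m + 1) (l' + 1)
            = qbin q m l' + q ^ (l' + 1) * qbin q m (l' + 1) := qbin_succ_succ q m l'
          _ = qbin q m (m - l') + q ^ (l' + 1) * qbin q m (m - l' - 1) := by
              rw [i1, i2, e3]
          _ = qbin q m (m - l' - 1 + 1) + q ^ (m - (m - l' - 1)) * qbin q m (m - l' - 1) := by
              rw [show m - l' - 1 + 1 = m - l' from by omega,
                show m - (m - l' - 1) = l' + 1 from by omega]
          _ = qbin q (m + 1) (m - l' - 1 + 1) := (qbin_pascal q m (m - l' - 1) (by omega)).symm
          _ = qbin q (m + 1) (m + 1 - (l' + 1)) := by rw [← e]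

end QbinArith

section LinAlgAux

variable {F : Type} [Field F]

lemma exists_finrank_le {V : Type} [AddCommGroup V] [Module F V] [FiniteDimensional F V]
    (r : ℕ) (hr : r ≤ finrank F V) : ∃ Z : Submodule F V, finrank F Z = r := by
  induction r with
  | zero => exact ⟨⊥, finrank_bot F V⟩
  | succ r ih =>
    obtain ⟨Z, hZ⟩ := ih (by omega)
    obtain ⟨x, hx⟩ := Z.exists_of_finrank_lt (by omega)
    have hx0 : x ≠ 0 := by
      intro h
      exact hx 1 one_ne_zero (by simp [h])
    refine ⟨Z ⊔ Submodule.span F {x}, ?_⟩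
    have hdisj : Z ⊓ Submodule.span F {x} = ⊥ := by
      ext y
      simp only [Submodule.mem_inf, Submodule.mem_bot]
      constructor
      · rintro ⟨hy1, hy2⟩
        obtain ⟨c, rfl⟩ := Submodule.mem_span_singleton.mp hy2
        rcases eq_or_ne c 0 with rfl | hc
        · simp
        · exact absurd hy1 (hx c hc)
      · rintro rfl
        simp
    have hsum := Submodule.finrank_sup_add_finrank_inf_eq Z (Submodule.span F {x})
    rw [hdisj, finrank_bot, finrank_span_singleton hx0, hZ] at hsum
    omega

lemma exists_le_finrank {V : Type} [AddCommGroup V] [Module F V] [FiniteDimensional F V]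
    (P : Submodule F V) (r : ℕ) (hr : r ≤ finrank F P) :
    ∃ Z : Submodule F V, Z ≤ P ∧ finrank F Z = r := by
  obtain ⟨Z0, hZ0⟩ := exists_finrank_le (V := ↥P) r hr
  refine ⟨Z0.map P.subtype, Submodule.map_subtype_le P Z0, ?_⟩
  rw [← hZ0]
  exact (Submodule.equivMapOfInjective P.subtype P.injective_subtype Z0).symm.finrank_eq

lemma finrank_map_subtype {V : Type} [AddCommGroup V] [Module F V]
    (P : Submodule F V) (Y : Submodule F ↥P) :
    finrank F (Y.map P.subtype) = finrank F Y :=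
  (Submodule.equivMapOfInjective P.subtype P.injective_subtype Y).symm.finrank_eq

lemma finrank_comap_subtype {V : Type} [AddCommGroup V] [Module F V]
    (P X : Submodule F V) (h : X ≤ P) :
    finrank F (X.comap P.subtype) = finrank F X := by
  have h1 := finrank_map_subtype P (X.comap P.subtype)
  rw [Submodule.map_comap_subtype, inf_eq_right.mpr h] at h1
  exact h1.symm

lemma comap_subtype_injOn {V : Type} [AddCommGroup V] [Module F V]
    (P X Y : Submodule F V) (hX : X ≤ P) (hY : Y ≤ P)
    (h : X.comap P.subtype = Y.comap P.subtype) : X = Y := by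
  have := congrArg (Submodule.map P.subtype) h
  rwa [Submodule.map_comap_subtype, Submodule.map_comap_subtype,
    inf_eq_right.mpr hX, inf_eq_right.mpr hY] at this

instance finite_submodule (F V : Type) [Field F] [Fintype F] [AddCommGroup V] [Module F V]
    [FiniteDimensional F V] : Finite (Submodule F V) := by
  haveI : Finite V := Module.finite_of_finite F
  exact Finite.of_injective (fun X : Submodule F V => (X : Set V)) SetLike.coe_injective

lemma card_module_eq (F : Type) [Field F] [Fintype F] (V : Type) [AddCommGroup V] [Module F V]
    [FiniteDimensional F V] : Nat.card V = Fintype.card F ^ finrank F V := by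
  have b := Module.finBasis F V
  rw [Nat.card_congr b.equivFun.toEquiv, Nat.card_fun, Nat.card_eq_fintype_card,
    Nat.card_eq_fintype_card, Fintype.card_fin]

/-- Fiber-counting bound for `Set.ncard`. -/
lemma ncard_le_mul {α β : Type*} [Finite α] (S : Set α) (T : Set β) (f : α → β)
    (hm : Set.MapsTo f S T) (hT : T.Finite) (c : ℕ)
    (hf : ∀ b ∈ T, {a | a ∈ S ∧ f a = b}.ncard ≤ c) : S.ncard ≤ c * T.ncard := by
  classical
  have hS : S.Finite := Set.toFinite S
  rw [Set.ncard_eq_toFinset_card _ hS, Set.ncard_eq_toFinset_card _ hT]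
  apply Finset.card_le_mul_card_image_of_maps_to
  · intro a ha
    rw [Set.Finite.mem_toFinset] at *
    exact hm ha
  · intro b hb
    rw [Set.Finite.mem_toFinset] at hb
    calc (hS.toFinset.filter fun a => f a = b).card
        = ((hS.toFinset.filter fun a => f a = b : Finset α) : Set α).ncard :=
          (Set.ncard_coe_finset _).symm
      _ = {a | a ∈ S ∧ f a = b}.ncard := by
          congr 1
          ext a
          simp [Set.Finite.mem_toFinset]
      _ ≤ c := hf b hb

end LinAlgAux

/-- The number of `l`-dimensional subspaces of an `m`-dimensional space over a finite field `F`
is at most `qbin (card F) m l`. -/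
lemma count_subspaces_le (F : Type) [Field F] [Fintype F] :
    ∀ (m l : ℕ) (V : Type) [AddCommGroup V] [Module F V] [FiniteDimensional F V],
      finrank F V = m →
      {X : Submodule F V | finrank F ↥X = l}.ncard ≤ qbin (Fintype.card F) m l := by
  intro m
  induction m with
  | zero =>
    intro l V _ _ _ hV
    have hsub : Subsingleton V := by
      rw [← Module.finrank_zero_iff (R := F)]
      omega
    have hbot : ∀ X : Submodule F V, X = ⊥ := fun X => by
      ext x
      simp [Subsingleton.elim x 0]
    cases l with
    | zero =>
      rw [qbin_zero]
      have : {X : Submodule F V | finrank F ↥X = 0} ⊆ {⊥} := fun X _ => hbot X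
      calc {X : Submodule F V | finrank F ↥X = 0}.ncard
          ≤ ({⊥} : Set (Submodule F V)).ncard :=
            Set.ncard_le_ncard this (Set.finite_singleton _)
        _ = 1 := Set.ncard_singleton _
    | succ l =>
      have : {X : Submodule F V | finrank F ↥X = l + 1} = ∅ := by
        ext X
        simp only [Set.mem_setOf_eq, Set.mem_empty_iff_false, iff_false]
        rw [hbot X]
        simp [finrank_bot]
      rw [this, Set.ncard_empty]
      exact Nat.zero_le _
  | succ m ih =>
    intro l V _ _ _ hV
    haveI : Finite V := Module.finite_of_finite F
    haveI : Finite (Submodule F V) :=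
      Finite.of_injective (fun X : Submodule F V => (X : Set V)) SetLike.coe_injective
    set q := Fintype.card F with hq
    cases l with
    | zero =>
      rw [qbin_zero]
      have hsub : {X : Submodule F V | finrank F ↥X = 0} ⊆ {⊥} := by
        intro X hX
        exact Submodule.finrank_eq_zero.mp hX
      calc {X : Submodule F V | finrank F ↥X = 0}.ncard
          ≤ ({⊥} : Set (Submodule F V)).ncard :=
            Set.ncard_le_ncard hsub (Set.finite_singleton _)
        _ = 1 := Set.ncard_singleton _
    | succ l' =>
      by_cases hlm : l' ≤ m
      · -- main case
        obtain ⟨H, hH⟩ := exists_finrank_le (F := F) (V := V) m (by rw [hV]; omega)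
        set S : Set (Submodule F V) := {X | finrank F ↥X = l' + 1} with hS
        -- part 1 : subspaces inside H
        have h1 : {X | X ∈ S ∧ X ≤ H}.ncard ≤ qbin q m (l' + 1) := by
          refine le_trans (Set.ncard_le_ncard_of_injOn (fun X => X.comap H.subtype)
            ?_ ?_ (Set.toFinite _)) (ih (l' + 1) ↥H hH)
          · rintro X ⟨hXS, hXH⟩
            simpa [hS, Set.mem_setOf_eq, finrank_comap_subtype H X hXH] using hXS
          · rintro X ⟨_, hXH⟩ Y ⟨_, hYH⟩ hXY
            exact comap_subtype_injOn H X Y hXH hYH hXY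
        -- part 2 : subspaces not inside H
        have h2 : {X | X ∈ S ∧ ¬X ≤ H}.ncard ≤ q ^ (m - l') * qbin q m l' := by
          -- the map to l'-dimensional subspaces of H
          have key : ∀ X, X ∈ S → ¬X ≤ H → finrank F ↥(X ⊓ H) = l' := by
            intro X hXS hXH
            have hXr : finrank F ↥X = l' + 1 := hXS
            have hsum := Submodule.finrank_sup_add_finrank_inf_eq X H
            have htop : finrank F ↥(X ⊔ H) = m + 1 := by
              have hlt : H < X ⊔ H := by
                refine lt_of_le_of_ne le_sup_right fun h => hXH ?_
                exact le_sup_left.trans (le_of_eq h.symm)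
              have := Submodule.finrank_lt_finrank_of_lt hlt
              have hle : finrank F ↥(X ⊔ H) ≤ m + 1 := by
                rw [← hV]
                exact Submodule.finrank_le _
              omega
            rw [htop, hXr, hH] at hsum
            omega
          -- fiber bound
          obtain ⟨u0, hu0⟩ := H.exists_of_finrank_lt (by rw [hH, hV]; omega)
          have hu0H : u0 ∉ H := fun h => hu0 1 one_ne_zero (by simpa using h)
          have hquot : finrank F (V ⧸ H) = 1 := by
            have := H.finrank_quotient_add_finrank
            rw [hH, hV] at this
            omega
          -- choice of coset representative
          have hz : ∀ X, X ∈ S → ¬X ≤ H → ∃ z, z ∈ X ∧ z - u0 ∈ H := by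
            intro X hXS hXH
            obtain ⟨x, hxX, hxH⟩ := SetLike.not_le_iff_exists.mp hXH
            have hmk : (H.mkQ x) ≠ 0 := by
              rw [Submodule.mkQ_apply, ne_eq, Submodule.Quotient.mk_eq_zero]
              exact hxH
            have hspan : Submodule.span F {H.mkQ x} = ⊤ := by
              apply Submodule.eq_top_of_finrank_eq
              rw [finrank_span_singleton hmk, hquot]
            have : H.mkQ u0 ∈ Submodule.span F {H.mkQ x} := by
              rw [hspan]; trivial
            obtain ⟨c, hc⟩ := Submodule.mem_span_singleton.mp this
            refine ⟨c • x, X.smul_mem c hxX, ?_⟩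
            have : H.mkQ (c • x - u0) = 0 := by
              rw [map_sub, map_smul, hc, sub_self]
            rwa [Submodule.mkQ_apply, Submodule.Quotient.mk_eq_zero] at this
          classical
          set zc : Submodule F V → V := fun X =>
            if h : ∃ z, z ∈ X ∧ z - u0 ∈ H then h.choose else 0 with hzc
          have hzc_spec : ∀ X, X ∈ S → ¬X ≤ H → zc X ∈ X ∧ zc X - u0 ∈ H := by
            intro X hXS hXH
            have h := hz X hXS hXH
            rw [hzc]
            simp only [dif_pos h]
            exact h.choose_spec
          have hzcH : ∀ X, X ∈ S → ¬X ≤ H → zc X ∉ H := by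
            intro X hXS hXH hmem
            have := (hzc_spec X hXS hXH).2
            exact hu0H (by simpa using H.sub_mem hmem this)
          refine le_trans (ncard_le_mul {X | X ∈ S ∧ ¬X ≤ H}
            {Y : Submodule F ↥H | finrank F ↥Y = l'}
            (fun X => (X ⊓ H).comap H.subtype) ?_ (Set.toFinite _) (q ^ (m - l')) ?_)
            (Nat.mul_le_mul_left _ (ih l' ↥H hH))
          · rintro X ⟨hXS, hXH⟩
            simp only [Set.mem_setOf_eq]
            rw [finrank_comap_subtype H (X ⊓ H) inf_le_right]
            exact key X hXS hXH
          · -- fiber over Y has at most q^(m-l') elements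
            intro Y hY
            set W : Submodule F V := Y.map H.subtype with hW
            have hWH : W ≤ H := Submodule.map_subtype_le H Y
            have hWr : finrank F ↥W = l' := by
              rw [hW, finrank_map_subtype]
              exact hY
            have hfib : ∀ X, X ∈ S → ¬X ≤ H → (X ⊓ H).comap H.subtype = Y → X ⊓ H = W := by
              intro X hXS hXH hXY
              have := congrArg (Submodule.map H.subtype) hXY
              rwa [Submodule.map_comap_subtype, inf_eq_right.mpr inf_le_right] at this
            -- injection into a coset of (H.map W.mkQ)
            set M : Submodule F (V ⧸ W) := H.map W.mkQ with hM
            have hMr : finrank F ↥M = m - l' := by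
              have hrn := LinearMap.finrank_range_add_finrank_ker (W.mkQ ∘ₗ H.subtype)
              have hrange : LinearMap.range (W.mkQ ∘ₗ H.subtype) = M := by
                rw [LinearMap.range_comp, Submodule.range_subtype]
              have hker : LinearMap.ker (W.mkQ ∘ₗ H.subtype) = W.comap H.subtype := by
                rw [LinearMap.ker_comp, Submodule.ker_mkQ]
              rw [hrange, hker, finrank_comap_subtype H W hWH, hWr, hH] at hrn
              have := (LinearEquiv.finrank_eq (LinearEquiv.refl F ↥M)).symm
              omega
            have hMcard : Nat.card ↥M = q ^ (m - l') := by
              rw [card_module_eq F ↥M, hMr]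
            -- the target set : coset of M
            set D : Set (V ⧸ W) := (fun v => W.mkQ u0 + v) '' (M : Set (V ⧸ W)) with hD
            haveI : Finite (V ⧸ W) := Quotient.finite _
            have hMcard2 : ((M : Set (V ⧸ W))).ncard = q ^ (m - l') := by
              rw [← Nat.card_coe_set_eq]
              exact hMcard
            have hDcard : D.ncard = q ^ (m - l') := by
              rw [hD, Set.ncard_image_of_injective _ (add_right_injective _)]
              exact hMcard2
            refine le_trans (Set.ncard_le_ncard_of_injOn (fun X => W.mkQ (zc X)) ?_ ?_
              (Set.toFinite _)) (le_of_eq hDcard)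
            · -- maps to D
              rintro X ⟨⟨hXS, hXH⟩, hXY⟩
              obtain ⟨hz1, hz2⟩ := hzc_spec X hXS hXH
              rw [hD]
              refine ⟨W.mkQ (zc X - u0), ?_, by simp⟩
              exact Submodule.mem_map_of_mem hz2
            · -- injective on the fiber
              rintro X ⟨⟨hXS, hXH⟩, hXY⟩ X' ⟨⟨hXS', hXH'⟩, hXY'⟩ heq
              have hXW : X ⊓ H = W := hfib X hXS hXH hXY
              have hXW' : X' ⊓ H = W := hfib X' hXS' hXH' hXY'
              obtain ⟨hz1, hz2⟩ := hzc_spec X hXS hXH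
              obtain ⟨hz1', hz2'⟩ := hzc_spec X' hXS' hXH'
              have hzH : zc X ∉ H := hzcH X hXS hXH
              have hdiff : zc X - zc X' ∈ W := by
                have : W.mkQ (zc X - zc X') = 0 := by
                  rw [map_sub]
                  simp only at heq
                  rw [heq, sub_self]
                rwa [Submodule.mkQ_apply, Submodule.Quotient.mk_eq_zero] at this
              -- show X ≤ X' and conclude
              have hzX' : zc X ∈ X' := by
                have hWX' : W ≤ X' := hXW' ▸ inf_le_left
                have := X'.add_mem (hWX' hdiff) hz1'
                simpa using this
              have hgen : ∀ Z : Submodule F V, finrank F ↥Z = l' + 1 → Z ⊓ H = W →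
                  zc X ∈ Z → Z = W ⊔ Submodule.span F {zc X} := by
                intro Z hZr hZW hzZ
                have hle : W ⊔ Submodule.span F {zc X} ≤ Z := by
                  refine sup_le (hZW ▸ inf_le_left) ?_
                  rwa [Submodule.span_singleton_le_iff_mem]
                have hz0 : zc X ≠ 0 := fun h => hzH (h ▸ H.zero_mem)
                have hdisj : W ⊓ Submodule.span F {zc X} = ⊥ := by
                  ext y
                  simp only [Submodule.mem_inf, Submodule.mem_bot]
                  constructor
                  · rintro ⟨hy1, hy2⟩
                    obtain ⟨c, rfl⟩ := Submodule.mem_span_singleton.mp hy2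
                    rcases eq_or_ne c 0 with rfl | hc
                    · simp
                    · exact absurd (H.smul_mem c⁻¹ (hWH hy1)) (by
                        rw [smul_smul, inv_mul_cancel₀ hc, one_smul]; exact hzH)
                  · rintro rfl; simp
                have hsum := Submodule.finrank_sup_add_finrank_inf_eq W
                  (Submodule.span F {zc X})
                rw [hdisj, finrank_bot, finrank_span_singleton hz0, hWr] at hsum
                exact (Submodule.eq_of_le_of_finrank_le hle (by omega)).symm
              have hX : X = W ⊔ Submodule.span F {zc X} := hgen X hXS hXW hz1
              have hX' : X' = W ⊔ Submodule.span F {zc X} := hgen X' hXS' hXW' hzX'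
              rw [hX, hX']
        -- combine
        have hsplit : S ⊆ {X | X ∈ S ∧ X ≤ H} ∪ {X | X ∈ S ∧ ¬X ≤ H} := by
          intro X hX
          by_cases h : X ≤ H
          · exact Or.inl ⟨hX, h⟩
          · exact Or.inr ⟨hX, h⟩
        calc S.ncard ≤ ({X | X ∈ S ∧ X ≤ H} ∪ {X | X ∈ S ∧ ¬X ≤ H}).ncard :=
              Set.ncard_le_ncard hsplit (Set.toFinite _)
          _ ≤ {X | X ∈ S ∧ X ≤ H}.ncard + {X | X ∈ S ∧ ¬X ≤ H}.ncard :=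
              Set.ncard_union_le _ _
          _ ≤ qbin q m (l' + 1) + q ^ (m - l') * qbin q m l' := Nat.add_le_add h1 h2
          _ = qbin q (m + 1) (l' + 1) := (qbin_pascal q m l' hlm).symm
      · -- degenerate case : l' + 1 > m + 1
        have : {X : Submodule F V | finrank F ↥X = l' + 1} = ∅ := by
          ext X
          simp only [Set.mem_setOf_eq, Set.mem_empty_iff_false, iff_false]
          intro h
          have hfl : finrank F ↥X ≤ m + 1 := by
            rw [← hV]
            exact Submodule.finrank_le X
          omega
        rw [this, Set.ncard_empty]
        exact Nat.zero_le _

/-- **Singleton bound for subspace codes.** Every subspace code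
`C ⊆ G_q(k,n)` with minimum injection distance at least `d` satisfies
`|C| ≤ [n-d+1 choose n-k]_q`. -/
theorem stmt_11 (q n k d : ℕ) (hq : IsPrimePow q) (hd : 1 ≤ d) (hdk : d ≤ k)
    (hk : k ≤ n - k) (F : Type) [Field F] [Fintype F] (hF : Fintype.card F = q)
    (C : Set (Submodule F (Fin n → F)))
    (hCk : ∀ X ∈ C, Module.finrank F X = k)
    (hCd : ∀ X ∈ C, ∀ Y ∈ C, X ≠ Y → d ≤ k - Module.finrank F ↥(X ⊓ Y)) :
    C.ncard ≤ qbin q (n - d + 1) (n - k) := by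
  classical
  have hVn : finrank F (Fin n → F) = n := Module.finrank_fin_fun F
  have hn2k : 2 * k ≤ n := by omega
  haveI : Finite (Fin n → F) := Module.finite_of_finite F
  -- the fixed subspace W of dimension n - d + 1
  obtain ⟨W, hWr⟩ := exists_finrank_le (F := F) (V := Fin n → F) (n - d + 1)
    (by rw [hVn]; omega)
  -- each codeword meets W in dimension ≥ k - d + 1
  have hmeet : ∀ X ∈ C, k - d + 1 ≤ finrank F ↥(X ⊓ W) := by
    intro X hX
    have hsum := Submodule.finrank_sup_add_finrank_inf_eq X W
    have hle : finrank F ↥(X ⊔ W) ≤ n := by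
      have h : finrank F ↥(X ⊔ W) ≤ finrank F (Fin n → F) := Submodule.finrank_le (X ⊔ W)
      omega
    rw [hCk X hX, hWr] at hsum
    omega
  -- choose a (k-d+1)-dimensional subspace of X ⊓ W for each codeword
  set f : Submodule F (Fin n → F) → Submodule F (Fin n → F) := fun X =>
    if h : ∃ Z : Submodule F (Fin n → F), Z ≤ X ⊓ W ∧ finrank F ↥Z = k - d + 1 then h.choose
    else ⊥ with hf
  have hf_spec : ∀ X ∈ C, f X ≤ X ⊓ W ∧ finrank F ↥(f X) = k - d + 1 := by
    intro X hX
    have h : ∃ Z : Submodule F (Fin n → F), Z ≤ X ⊓ W ∧ finrank F ↥Z = k - d + 1 :=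
      exists_le_finrank (X ⊓ W) (k - d + 1) (hmeet X hX)
    have he : f X = h.choose := by
      rw [hf]
      exact dif_pos h
    rw [he]
    exact h.choose_spec
  -- C injects into the (k-d+1)-subspaces of W
  set T0 : Set (Submodule F (Fin n → F)) := {Z | Z ≤ W ∧ finrank F ↥Z = k - d + 1} with hT0
  have step1 : C.ncard ≤ T0.ncard := by
    refine Set.ncard_le_ncard_of_injOn f ?_ ?_ (Set.toFinite _)
    · intro X hX
      obtain ⟨h1, h2⟩ := hf_spec X hX
      exact ⟨le_trans h1 inf_le_right, h2⟩
    · intro X hX Y hY heq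
      by_contra hne
      obtain ⟨hX1, hX2⟩ := hf_spec X hX
      obtain ⟨hY1, hY2⟩ := hf_spec Y hY
      have hZXY : f X ≤ X ⊓ Y := le_inf (le_trans hX1 inf_le_left)
        (heq ▸ le_trans hY1 inf_le_left : f X ≤ Y)
      have hrk : k - d + 1 ≤ finrank F ↥(X ⊓ Y) := by
        rw [← hX2]
        exact Submodule.finrank_mono hZXY
      have hrk2 : finrank F ↥(X ⊓ Y) ≤ k := by
        rw [← hCk X hX]
        exact Submodule.finrank_mono inf_le_left
      have := hCd X hX Y hY hne
      omega
  -- T0 injects into subspaces of ↥W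
  have step2 : T0.ncard ≤ qbin (Fintype.card F) (n - d + 1) (k - d + 1) := by
    refine le_trans (Set.ncard_le_ncard_of_injOn (fun Z => Z.comap W.subtype) ?_ ?_
      (Set.toFinite _)) (count_subspaces_le F (n - d + 1) (k - d + 1) ↥W hWr)
    · rintro Z ⟨hZW, hZr⟩
      simp only [Set.mem_setOf_eq]
      rw [finrank_comap_subtype W Z hZW]
      exact hZr
    · rintro Z ⟨hZW, _⟩ Z' ⟨hZW', _⟩ heq
      exact comap_subtype_injOn W Z Z' hZW hZW' heq
  have hsymm : qbin q (n - d + 1) (k - d + 1) = qbin q (n - d + 1) (n - k) := by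
    have h1 : k - d + 1 ≤ n - d + 1 := by omega
    have h2 : n - d + 1 - (k - d + 1) = n - k := by omega
    rw [qbin_symm q (n - d + 1) (k - d + 1) h1, h2]
  rw [← hsymm]
  rw [hF] at step2
  exact le_trans step1 step2
end
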